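/- Let u : ℝ³ → ℝ³ be a smooth, compactly supported vector field. Then ∫_{ℝ³} (curl u) · curl((u·∇)u) dx = −(1/2)∫_{ℝ³} |curl u|² (div u) dx + ∫_{ℝ³} (∇u^i × ∂_i u) · (curl u) dx, where the sum over i = 1,2,3 is implicit in the last integral. -/

import Mathlib

open MeasureTheory Real

noncomputable section

/-- Points of `ℝ³`, modeled as `Fin 3 → ℝ`. -/
abbrev V3 : Type := Fin 3 → ℝ

/-- Partial derivative in direction `i`. -/
noncomputable def pd (i : Fin 3) (f : V3 → ℝ) (x : V3) : ℝ :=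
  fderiv ℝ f x (Pi.single i 1)

/-- Gradient. -/
noncomputable def vgrad (f : V3 → ℝ) (x : V3) : V3 := fun i => pd i f x

/-- Divergence. -/
noncomputable def vdiv (u : V3 → V3) (x : V3) : ℝ := ∑ i, pd i (fun y => u y i) x

/-- Curl. -/
noncomputable def vcurl (u : V3 → V3) (x : V3) : V3 :=
  ![pd 1 (fun y => u y 2) x - pd 2 (fun y => u y 1) x,
    pd 2 (fun y => u y 0) x - pd 0 (fun y => u y 2) x,
    pd 0 (fun y => u y 1) x - pd 1 (fun y => u y 0) x]

/-- Cross product. -/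
def vcross (a b : V3) : V3 :=
  ![a 1 * b 2 - a 2 * b 1, a 2 * b 0 - a 0 * b 2, a 0 * b 1 - a 1 * b 0]

/-- Dot product. -/
def vdot (a b : V3) : ℝ := ∑ i, a i * b i

/-- Convective derivative `(a·∇)b`, with `i`-th component `a^j ∂_j b^i`. -/
noncomputable def vconv (a b : V3 → V3) (x : V3) : V3 :=
  fun i => ∑ j, a x j * pd j (fun y => b y i) x

section Helpers

lemma contDiff_pd {f : V3 → ℝ} (hf : ContDiff ℝ (⊤:ℕ∞) f) (i : Fin 3) :
    ContDiff ℝ (⊤:ℕ∞) (pd i f) :=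
  ((contDiff_infty_iff_fderiv.mp hf).2).clm_apply contDiff_const

lemma hcs_pd {f : V3 → ℝ} (hc : HasCompactSupport f) (i : Fin 3) :
    HasCompactSupport (pd i f) :=
  (hc.fderiv (𝕜 := ℝ)).comp_left (g := fun L : V3 →L[ℝ] ℝ => L (Pi.single i 1)) rfl

lemma hcs_comp {u : V3 → V3} (hc : HasCompactSupport u) (i : Fin 3) :
    HasCompactSupport (fun x => u x i) :=
  hc.comp_left (g := fun v : V3 => v i) rfl

lemma pd_mul {f g : V3 → ℝ} (hf : ContDiff ℝ (⊤:ℕ∞) f) (hg : ContDiff ℝ (⊤:ℕ∞) g)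
    (i : Fin 3) (x : V3) :
    pd i (fun y => f y * g y) x = pd i f x * g x + f x * pd i g x := by
  unfold pd
  rw [fderiv_fun_mul (hf.differentiable (by simp) x)
    (hg.differentiable (by simp) x)]
  simp
  ring

lemma pd_sub {f g : V3 → ℝ} (hf : ContDiff ℝ (⊤:ℕ∞) f) (hg : ContDiff ℝ (⊤:ℕ∞) g)
    (i : Fin 3) (x : V3) :
    pd i (fun y => f y - g y) x = pd i f x - pd i g x := by
  unfold pd
  rw [fderiv_fun_sub (hf.differentiable (by simp) x)
    (hg.differentiable (by simp) x)]
  simp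

lemma pd_sum {g : Fin 3 → V3 → ℝ} (hg : ∀ k, ContDiff ℝ (⊤:ℕ∞) (g k)) (i : Fin 3) (x : V3) :
    pd i (fun y => ∑ k, g k y) x = ∑ k, pd i (g k) x := by
  unfold pd
  rw [fderiv_fun_sum (fun k _ => (hg k).differentiable (by simp) x)]
  simp

lemma pd_comm {f : V3 → ℝ} (hf : ContDiff ℝ (⊤:ℕ∞) f) (i j : Fin 3) (x : V3) :
    pd i (pd j f) x = pd j (pd i f) x := by
  have hd : Differentiable ℝ f := hf.differentiable (by simp)
  have hfd : ContDiff ℝ (⊤:ℕ∞) (fderiv ℝ f) := (contDiff_infty_iff_fderiv.mp hf).2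
  have hdd : Differentiable ℝ (fderiv ℝ f) := hfd.differentiable (by simp)
  have key := second_derivative_symmetric (f := f) (f' := fderiv ℝ f)
    (f'' := fderiv ℝ (fderiv ℝ f) x) (fun y => (hd y).hasFDerivAt) ((hdd x).hasFDerivAt)
  have h1 : ∀ v w : V3, fderiv ℝ (fun y => fderiv ℝ f y w) x v = fderiv ℝ (fderiv ℝ f) x v w := by
    intro v w
    rw [fderiv_clm_apply (hdd x) (differentiableAt_const w)]
    simp
  show fderiv ℝ (fun y => fderiv ℝ f y (Pi.single j 1)) x (Pi.single i 1) =
    fderiv ℝ (fun y => fderiv ℝ f y (Pi.single i 1)) x (Pi.single j 1)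
  rw [h1, h1, key]

lemma integral_pd_eq_zero {f : V3 → ℝ} (hf : ContDiff ℝ (⊤:ℕ∞) f) (hc : HasCompactSupport f)
    (i : Fin 3) : ∫ x : V3, pd i f x = 0 := by
  have hdiff : Differentiable ℝ f := hf.differentiable (by simp)
  have h := integral_mul_fderiv_eq_neg_fderiv_mul_of_integrable (μ := volume)
    (f := fun _ : V3 => (1:ℝ)) (g := f) (v := Pi.single i 1)
    ?_ ?_ ?_ (fun x _ => differentiableAt_const (1:ℝ)) (fun x _ => hdiff x)
  · simpa [pd] using h
  · simp [integrable_zero]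
  · have : Integrable (pd i f) := ((contDiff_pd hf i).continuous).integrable_of_hasCompactSupport
      (hcs_pd hc i)
    simpa [pd] using (this : Integrable (fun x => pd i f x))
  · simpa using hf.continuous.integrable_of_hasCompactSupport hc

lemma pointwise (u : V3 → V3) (hu : ContDiff ℝ (⊤:ℕ∞) u) (x : V3) :
    vdot (vcurl u x) (vcurl (fun y => vconv u u y) x) =
      (1/2) * ∑ j, u x j * pd j (fun y => ∑ k, (vcurl u y k)^2) x
      + ∑ i, vdot (vcross (vgrad (fun y => u y i) x)
          (fun j => pd i (fun y => u y j) x)) (vcurl u x) := by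
  have hf : ∀ k, ContDiff ℝ (⊤:ℕ∞) (fun x => u x k) := fun k => contDiff_pi.mp hu k
  have hconv : ∀ k i, pd k (fun y => vconv u u y i) x =
      ∑ j, (pd k (fun y => u y j) x * pd j (fun y => u y i) x
        + u x j * pd k (pd j (fun y => u y i)) x) := by
    intro k i
    have h1 : pd k (fun y => vconv u u y i) x
        = ∑ j, pd k (fun y => (fun z => u z j) y * pd j (fun z => u z i) y) x :=
      pd_sum (fun j => (hf j).mul (contDiff_pd (hf i) j)) k x
    rw [h1]
    exact Finset.sum_congr rfl fun j _ =>
      pd_mul (hf j) (contDiff_pd (hf i) j) k x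
  have hwc : ∀ k, ContDiff ℝ (⊤:ℕ∞) (fun y => vcurl u y k) := by
    intro k
    fin_cases k
    · exact (contDiff_pd (hf 2) 1).sub (contDiff_pd (hf 1) 2)
    · exact (contDiff_pd (hf 0) 2).sub (contDiff_pd (hf 2) 0)
    · exact (contDiff_pd (hf 1) 0).sub (contDiff_pd (hf 0) 1)
  have hsq : ∀ j : Fin 3, pd j (fun y => ∑ k, (vcurl u y k)^2) x
      = ∑ k, 2 * vcurl u x k * pd j (fun y => vcurl u y k) x := by
    intro j
    have h1 : pd j (fun y => ∑ k, (fun z => (vcurl u z k)^2) y) x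
        = ∑ k, pd j (fun z => (vcurl u z k)^2) x :=
      pd_sum (fun k => (hwc k).pow 2) j x
    rw [h1]
    refine Finset.sum_congr rfl fun k _ => ?_
    have h2 : (fun z => (vcurl u z k)^2)
        = fun z => (fun y => vcurl u y k) z * (fun y => vcurl u y k) z := by
      funext z; ring
    rw [h2, pd_mul (hwc k) (hwc k) j x]
    ring
  have hpdsub : ∀ (j a b c d : Fin 3),
      pd j (fun y => pd a (fun z => u z b) y - pd c (fun z => u z d) y) x
        = pd j (pd a (fun z => u z b)) x - pd j (pd c (fun z => u z d)) x :=
    fun j a b c d => pd_sub (contDiff_pd (hf b) a) (contDiff_pd (hf d) c) j x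
  have hq10 : ∀ k, pd 1 (pd 0 (fun z => u z k)) x = pd 0 (pd 1 (fun z => u z k)) x :=
    fun k => pd_comm (hf k) 1 0 x
  have hq20 : ∀ k, pd 2 (pd 0 (fun z => u z k)) x = pd 0 (pd 2 (fun z => u z k)) x :=
    fun k => pd_comm (hf k) 2 0 x
  have hq21 : ∀ k, pd 2 (pd 1 (fun z => u z k)) x = pd 1 (pd 2 (fun z => u z k)) x :=
    fun k => pd_comm (hf k) 2 1 x
  simp only [hsq]
  simp only [vdot, vcross, vgrad, vcurl, Fin.sum_univ_three, Matrix.cons_val_zero,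
    Matrix.cons_val_one, Matrix.head_cons, Matrix.cons_val_two, Matrix.tail_cons,
    hconv, hpdsub, hq10, hq20, hq21]
  ring

end Helpers
/-- ∫ (curl u)·curl((u·∇)u) = −½∫|curl u|² div u + ∫ (∇u^i × ∂_i u)·curl u. -/
theorem stmt6 (u : V3 → V3) (hu : ContDiff ℝ (⊤ : ℕ∞) u) (hc : HasCompactSupport u) :
    ∫ x : V3, vdot (vcurl u x) (vcurl (fun y => vconv u u y) x) =
      -(1 / 2) * (∫ x : V3, (∑ i, (vcurl u x i) ^ 2) * vdiv u x) +
        ∫ x : V3, ∑ i,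
          vdot (vcross (vgrad (fun y => u y i) x) (fun j => pd i (fun y => u y j) x))
            (vcurl u x) := by
  have hu' : ContDiff ℝ (⊤:ℕ∞) u := hu.of_le (by simp)
  have hf : ∀ k, ContDiff ℝ (⊤:ℕ∞) (fun x => u x k) := fun k => contDiff_pi.mp hu' k
  have hwc : ∀ k, ContDiff ℝ (⊤:ℕ∞) (fun y => vcurl u y k) := by
    intro k
    fin_cases k
    · exact (contDiff_pd (hf 2) 1).sub (contDiff_pd (hf 1) 2)
    · exact (contDiff_pd (hf 0) 2).sub (contDiff_pd (hf 2) 0)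
    · exact (contDiff_pd (hf 1) 0).sub (contDiff_pd (hf 0) 1)
  have hsqc : ContDiff ℝ (⊤:ℕ∞) (fun y => ∑ k, (vcurl u y k)^2) :=
    ContDiff.sum fun k _ => (hwc k).pow 2
  -- continuity atoms
  have hcu : ∀ k : Fin 3, Continuous fun x => u x k := fun k => (hf k).continuous
  have hcp : ∀ (j k : Fin 3), Continuous (pd j (fun y => u y k)) :=
    fun j k => (contDiff_pd (hf k) j).continuous
  have hcw : ∀ k, Continuous fun x => vcurl u x k := fun k => (hwc k).continuous
  have hcpsq : ∀ j, Continuous (pd j (fun y => ∑ k, (vcurl u y k)^2)) :=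
    fun j => (contDiff_pd hsqc j).continuous
  -- vanishing outside the support of u
  have hKc : IsCompact (tsupport u) := hc
  have hu0 : ∀ x ∉ tsupport u, ∀ k : Fin 3, u x k = 0 := by
    intro x hx k
    have : u x = 0 := image_eq_zero_of_notMem_tsupport hx
    simp [this]
  have hp0 : ∀ x ∉ tsupport u, ∀ (j k : Fin 3), pd j (fun y => u y k) x = 0 := by
    intro x hx j k
    have h1 : ∀ y ∈ (tsupport u)ᶜ, (fun y => u y k) y = (0 : ℝ) := by
      intro y hy
      simp [image_eq_zero_of_notMem_tsupport hy]
    have h2 : (fun y => u y k) =ᶠ[nhds x] (fun _ => (0:ℝ)) :=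
      Filter.eventuallyEq_of_mem ((isClosed_tsupport u).isOpen_compl.mem_nhds hx) h1
    unfold pd
    rw [h2.fderiv_eq]
    simp
  have hw0 : ∀ x ∉ tsupport u, ∀ k : Fin 3, vcurl u x k = 0 := by
    intro x hx k
    fin_cases k <;>
      simp [vcurl, hp0 x hx]
  -- integrability of the second integrand
  have hT2int : Integrable (fun x => ∑ i, vdot (vcross (vgrad (fun y => u y i) x)
      (fun j => pd i (fun y => u y j) x)) (vcurl u x)) volume := by
    refine Continuous.integrable_of_hasCompactSupport ?_ ?_
    · refine continuous_finset_sum _ fun i _ => ?_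
      unfold vdot
      refine continuous_finset_sum _ fun k _ => ?_
      fin_cases k <;>
        · simp only [vcross, vgrad, Matrix.cons_val_zero, Matrix.cons_val_one,
            Matrix.head_cons, Matrix.cons_val_two, Matrix.tail_cons]
          exact (((hcp _ _).mul (hcp _ _)).sub ((hcp _ _).mul (hcp _ _))).mul (hcw _)
    · refine HasCompactSupport.intro hKc fun x hx => ?_
      simp [vdot, hw0 x hx]
  -- integrability of the pieces of the first integrand
  have hAint : ∀ j : Fin 3, Integrable
      (fun x => pd j (fun y => u y j) x * (∑ k, (vcurl u x k)^2)) volume := by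
    intro j
    refine Continuous.integrable_of_hasCompactSupport
      ((hcp j j).mul (continuous_finset_sum _ fun k _ => (hcw k).pow 2)) ?_
    refine HasCompactSupport.intro hKc fun x hx => ?_
    simp [hp0 x hx]
  have hBint : ∀ j : Fin 3, Integrable
      (fun x => u x j * pd j (fun y => ∑ k, (vcurl u y k)^2) x) volume := by
    intro j
    refine Continuous.integrable_of_hasCompactSupport ((hcu j).mul (hcpsq j)) ?_
    refine HasCompactSupport.intro hKc fun x hx => ?_
    simp [hu0 x hx]
  have hT1int : Integrable
      (fun x => (1/2) * ∑ j, u x j * pd j (fun y => ∑ k, (vcurl u y k)^2) x) volume := by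
    have := (integrable_finset_sum Finset.univ fun j _ => hBint j)
    exact this.const_mul _
  -- the integration by parts step
  have key3 : ∀ j : Fin 3, ∫ x : V3, u x j * pd j (fun y => ∑ k, (vcurl u y k)^2) x
      = - ∫ x : V3, pd j (fun y => u y j) x * (∑ k, (vcurl u x k)^2) := by
    intro j
    have hz : ∫ x : V3, pd j (fun y => u y j * ∑ k, (vcurl u y k)^2) x = 0 :=
      integral_pd_eq_zero ((hf j).mul hsqc) ((hcs_comp hc j).mul_right) j
    have hmul : ∀ x : V3, pd j (fun y => u y j * ∑ k, (vcurl u y k)^2) x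
        = pd j (fun y => u y j) x * (∑ k, (vcurl u x k)^2)
          + u x j * pd j (fun y => ∑ k, (vcurl u y k)^2) x :=
      fun x => pd_mul (hf j) hsqc j x
    rw [integral_congr_ae (Filter.Eventually.of_forall hmul)] at hz
    rw [integral_add (hAint j) (hBint j)] at hz
    linarith
  -- compute the first piece
  have hT1 : ∫ x : V3, (1/2) * ∑ j, u x j * pd j (fun y => ∑ k, (vcurl u y k)^2) x
      = -(1 / 2) * (∫ x : V3, (∑ i, (vcurl u x i) ^ 2) * vdiv u x) := by
    rw [integral_const_mul]
    rw [integral_finset_sum Finset.univ fun j _ => hBint j]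
    have h1 : ∑ j : Fin 3, ∫ x : V3, u x j * pd j (fun y => ∑ k, (vcurl u y k)^2) x
        = - ∑ j : Fin 3, ∫ x : V3, pd j (fun y => u y j) x * (∑ k, (vcurl u x k)^2) := by
      rw [← Finset.sum_neg_distrib]
      exact Finset.sum_congr rfl fun j _ => key3 j
    rw [h1, ← integral_finset_sum Finset.univ fun j _ => hAint j]
    have h2 : ∀ x : V3, (∑ j : Fin 3, pd j (fun y => u y j) x * (∑ k, (vcurl u x k)^2))
        = (∑ i, (vcurl u x i) ^ 2) * vdiv u x := by
      intro x
      rw [vdiv, ← Finset.sum_mul, mul_comm]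
    rw [integral_congr_ae (Filter.Eventually.of_forall h2)]
    ring
  rw [integral_congr_ae (Filter.Eventually.of_forall (pointwise u hu'))]
  rw [integral_add hT1int hT2int, hT1]
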